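/- Let m > 1/2, let n ≥ 2 and r be integers with 1 ≤ r ≤ n/2, and set c̄_m = Σ_{k=1}^∞ k^{−2m}. Define λ_{c,r} = Σ_{k=1}^∞ (2π(kn−r))^{−2m} + Σ_{k=0}^∞ (2π(kn+r))^{−2m} and λ_{d,r} = Σ_{k=1}^∞ (2π(kn−r))^{−4m} + Σ_{k=0}^∞ (2π(kn+r))^{−4m}. Then λ_{c,r}² − λ_{d,r} ≤ 2(1 + 2^{1−2m} c̄_m)(2πr)^{−2m}(πn)^{−2m} + (1 + 2^{1−2m} c̄_m)² (πn)^{−4m}. -/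

import Mathlib

/-!
Write `λ_{c,r} = a + R`, where `a = (2πr)^{-2m}` is the term `j = r` of the sum over `j ≡ r (mod n)`.
Since `λ_{d,r} ≥ a²`, we get `λ_{c,r}² - λ_{d,r} ≤ 2aR + R²`. In `R`, the term `j = r - n` is at most
`(πn)^{-2m}` because `n - r ≥ n/2`, and the two remaining tails are dominated termwise by
`(2πn(k+1))^{-2m}`, so each is at most `2^{-2m} c̄_m (πn)^{-2m}`.
-/

open Real

noncomputable section

/-- `λ_{c,r} = ∑_{k=1}^∞ (2π(kn-r))^{-2m} + ∑_{k=0}^∞ (2π(kn+r))^{-2m}`. -/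
def lamC (m : ℝ) (n : ℕ) (r : ℕ) : ℝ :=
  (∑' k : ℕ, (2 * π * (((k : ℝ) + 1) * n - r)) ^ (-(2 * m)))
    + ∑' k : ℕ, (2 * π * ((k : ℝ) * n + r)) ^ (-(2 * m))

/-- `λ_{d,r} = ∑_{k=1}^∞ (2π(kn-r))^{-4m} + ∑_{k=0}^∞ (2π(kn+r))^{-4m}`. -/
def lamD (m : ℝ) (n : ℕ) (r : ℕ) : ℝ :=
  (∑' k : ℕ, (2 * π * (((k : ℝ) + 1) * n - r)) ^ (-(4 * m)))
    + ∑' k : ℕ, (2 * π * ((k : ℝ) * n + r)) ^ (-(4 * m))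

section ComparisonWithZeta

variable {q c : ℝ} {f : ℕ → ℝ}

lemma summable_nat_add_one_rpow_neg (hq : 1 < q) :
    Summable fun k : ℕ => ((k : ℝ) + 1) ^ (-q) := by
  simpa using (summable_nat_add_iff 1).mpr (summable_nat_rpow.mpr (by linarith))

lemma nonneg_of_mul_succ_le (hc : 0 ≤ c) (hf : ∀ k : ℕ, c * ((k : ℝ) + 1) ≤ f k) (k : ℕ) :
    0 ≤ f k :=
  (by positivity : 0 ≤ c * ((k : ℝ) + 1)).trans (hf k)

lemma rpow_neg_le_of_mul_succ_le (hq : 0 ≤ q) (hc : 0 < c)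
    (hf : ∀ k : ℕ, c * ((k : ℝ) + 1) ≤ f k) (k : ℕ) :
    f k ^ (-q) ≤ c ^ (-q) * ((k : ℝ) + 1) ^ (-q) := by
  rw [← mul_rpow hc.le (by positivity)]
  exact rpow_le_rpow_of_nonpos (by positivity) (hf k) (by linarith)

lemma summable_rpow_neg_of_mul_succ_le (hq : 1 < q) (hc : 0 < c)
    (hf : ∀ k : ℕ, c * ((k : ℝ) + 1) ≤ f k) : Summable fun k => f k ^ (-q) :=
  .of_nonneg_of_le (fun k => rpow_nonneg (nonneg_of_mul_succ_le hc.le hf k) _)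
    (rpow_neg_le_of_mul_succ_le (by linarith) hc hf)
    ((summable_nat_add_one_rpow_neg hq).mul_left _)

lemma tsum_rpow_neg_le_of_mul_succ_le (hq : 1 < q) (hc : 0 < c)
    (hf : ∀ k : ℕ, c * ((k : ℝ) + 1) ≤ f k) :
    ∑' k, f k ^ (-q) ≤ c ^ (-q) * ∑' k : ℕ, ((k : ℝ) + 1) ^ (-q) := by
  rw [← tsum_mul_left]
  exact (summable_rpow_neg_of_mul_succ_le hq hc hf).tsum_le_tsum
    (rpow_neg_le_of_mul_succ_le (by linarith) hc hf)
    ((summable_nat_add_one_rpow_neg hq).mul_left _)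

end ComparisonWithZeta

/-- `∑_{j ≡ r (mod n)} |2πj|^{-s}`, split into `j = r - kn` (`k ≥ 1`) and `j = r + kn` (`k ≥ 0`);
`λ_{c,r}` and `λ_{d,r}` are the cases `s = 2m` and `s = 4m`. -/
def aliasedRpowSum (s : ℝ) (n r : ℕ) : ℝ :=
  (∑' k : ℕ, (2 * π * (((k : ℝ) + 1) * n - r)) ^ (-s))
    + ∑' k : ℕ, (2 * π * ((k : ℝ) * n + r)) ^ (-s)

lemma lamC_eq_aliasedRpowSum (m : ℝ) (n r : ℕ) : lamC m n r = aliasedRpowSum (2 * m) n r := rfl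

lemma lamD_eq_aliasedRpowSum (m : ℝ) (n r : ℕ) : lamD m n r = aliasedRpowSum (4 * m) n r := rfl

namespace aliasedRpowSum

variable {s : ℝ} {n r : ℕ}

lemma mul_succ_le_sub (hr : r ≤ n) (k : ℕ) :
    2 * π * n * ((k : ℝ) + 1) ≤ 2 * π * (((k : ℝ) + 2) * n - r) := by
  have : (r : ℝ) ≤ n := by exact_mod_cast hr
  nlinarith [pi_pos]

lemma mul_succ_le_add (k : ℕ) :
    2 * π * n * ((k : ℝ) + 1) ≤ 2 * π * (((k : ℝ) + 1) * n + r) := by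
  have : (0 : ℝ) ≤ r := r.cast_nonneg
  nlinarith [pi_pos]

lemma eq_add_tails (hs : 1 < s) (hn : 0 < n) (hr : r ≤ n) :
    aliasedRpowSum s n r = (2 * π * r) ^ (-s) + (2 * π * (n - r)) ^ (-s)
      + ∑' k : ℕ, (2 * π * (((k : ℝ) + 2) * n - r)) ^ (-s)
      + ∑' k : ℕ, (2 * π * (((k : ℝ) + 1) * n + r)) ^ (-s) := by
  have hc : 0 < 2 * π * n := by positivity
  have hsub := summable_rpow_neg_of_mul_succ_le hs hc (mul_succ_le_sub hr)
  have hadd := summable_rpow_neg_of_mul_succ_le hs hc (mul_succ_le_add (r := r))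
  have hsub_split : ∑' k : ℕ, (2 * π * (((k : ℝ) + 1) * n - r)) ^ (-s)
      = (2 * π * (n - r)) ^ (-s) + ∑' k : ℕ, (2 * π * (((k : ℝ) + 2) * n - r)) ^ (-s) := by
    rw [tsum_eq_zero_add' (by convert hsub using 5; push_cast; ring)]
    push_cast
    ring_nf
  have hadd_split : ∑' k : ℕ, (2 * π * ((k : ℝ) * n + r)) ^ (-s)
      = (2 * π * r) ^ (-s) + ∑' k : ℕ, (2 * π * (((k : ℝ) + 1) * n + r)) ^ (-s) := by
    rw [tsum_eq_zero_add' (by convert hadd using 5; push_cast; ring)]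
    push_cast
    ring_nf
  rw [aliasedRpowSum, hsub_split, hadd_split]
  ring

lemma rpow_le (hs : 1 < s) (hn : 0 < n) (hr : r ≤ n) :
    (2 * π * r) ^ (-s) ≤ aliasedRpowSum s n r := by
  have hr' : (r : ℝ) ≤ n := by exact_mod_cast hr
  have hfirst : 0 ≤ (2 * π * (n - r)) ^ (-s) := rpow_nonneg (by nlinarith [pi_pos]) _
  have hc : 0 ≤ 2 * π * n := by positivity
  have hsub : 0 ≤ ∑' k : ℕ, (2 * π * (((k : ℝ) + 2) * n - r)) ^ (-s) :=
    tsum_nonneg fun k => rpow_nonneg (nonneg_of_mul_succ_le hc (mul_succ_le_sub hr) k) _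
  have hadd : 0 ≤ ∑' k : ℕ, (2 * π * (((k : ℝ) + 1) * n + r)) ^ (-s) :=
    tsum_nonneg fun k => rpow_nonneg (nonneg_of_mul_succ_le hc mul_succ_le_add k) _
  rw [eq_add_tails hs hn hr]
  linarith

lemma le_rpow_add (hs : 1 < s) (hn : 0 < n) (hr : 2 * r ≤ n) :
    aliasedRpowSum s n r ≤ (2 * π * r) ^ (-s)
      + (1 + (2 : ℝ) ^ (1 - s) * ∑' k : ℕ, ((k : ℝ) + 1) ^ (-s)) * (π * n) ^ (-s) := by
  have hr' : (2 * r : ℝ) ≤ n := by exact_mod_cast hr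
  have hc : 0 < 2 * π * n := by positivity
  have hfirst : (2 * π * (n - r)) ^ (-s) ≤ (π * n) ^ (-s) :=
    rpow_le_rpow_of_nonpos (by positivity) (by nlinarith [pi_pos]) (by linarith)
  have hsub := tsum_rpow_neg_le_of_mul_succ_le hs hc (mul_succ_le_sub (r := r) (by omega))
  have hadd := tsum_rpow_neg_le_of_mul_succ_le hs hc (mul_succ_le_add (r := r))
  have hsplit : (2 * π * n) ^ (-s) = (2 : ℝ) ^ (-s) * (π * n) ^ (-s) := by
    rw [mul_assoc, mul_rpow zero_le_two (by positivity)]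
  have htwo : (2 : ℝ) ^ (1 - s) = 2 * 2 ^ (-s) := by
    rw [sub_eq_add_neg, rpow_add two_pos, rpow_one]
  rw [eq_add_tails hs hn (by omega), htwo]
  rw [hsplit] at hsub hadd
  linear_combination hfirst + hsub + hadd

end aliasedRpowSum

lemma rpow_neg_two_mul_sq {x : ℝ} (hx : 0 ≤ x) (m : ℝ) : (x ^ (-(2 * m))) ^ 2 = x ^ (-(4 * m)) := by
  rw [← rpow_mul_natCast hx]
  ring_nf

theorem lamC_sq_sub_lamD_bound_general (m : ℝ) (hm : 1 / 2 < m) (n r : ℕ)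
    (hn : 2 ≤ n) (hr : 2 * r ≤ n) :
    (lamC m n r) ^ 2 - lamD m n r ≤
      2 * (1 + (2 : ℝ) ^ (1 - 2 * m) * ∑' k : ℕ, ((k : ℝ) + 1) ^ (-(2 * m))) *
          (2 * π * r) ^ (-(2 * m)) * (π * n) ^ (-(2 * m)) +
        (1 + (2 : ℝ) ^ (1 - 2 * m) * ∑' k : ℕ, ((k : ℝ) + 1) ^ (-(2 * m))) ^ 2 *
          (π * n) ^ (-(4 * m)) := by
  set K := 1 + (2 : ℝ) ^ (1 - 2 * m) * ∑' k : ℕ, ((k : ℝ) + 1) ^ (-(2 * m))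
  set a := (2 * π * r) ^ (-(2 * m))
  set b := (π * n) ^ (-(2 * m))
  rw [lamC_eq_aliasedRpowSum, lamD_eq_aliasedRpowSum]
  have hn0 : 0 < n := by omega
  have ha : 0 ≤ a := by positivity
  have hC_lower : a ≤ aliasedRpowSum (2 * m) n r := aliasedRpowSum.rpow_le (by linarith) hn0 (by omega)
  have hC_upper : aliasedRpowSum (2 * m) n r ≤ a + K * b := aliasedRpowSum.le_rpow_add (by linarith) hn0 hr
  have hD_lower : a ^ 2 ≤ aliasedRpowSum (4 * m) n r := by
    rw [rpow_neg_two_mul_sq (by positivity)]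
    exact aliasedRpowSum.rpow_le (by linarith) hn0 (by omega)
  calc aliasedRpowSum (2 * m) n r ^ 2 - aliasedRpowSum (4 * m) n r ≤ (a + K * b) ^ 2 - a ^ 2 := by
        gcongr
        exact ha.trans hC_lower
    _ = 2 * K * a * b + K ^ 2 * b ^ 2 := by ring
    _ = _ := by rw [rpow_neg_two_mul_sq (by positivity)]

/-- First step of inequality (point:0) in Lemma S.4:
`λ_{c,r}² - λ_{d,r} ≤ 2(1 + 2^{1-2m} c̄_m)(2πr)^{-2m}(πn)^{-2m} + (1 + 2^{1-2m} c̄_m)²(πn)^{-4m}`. -/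
theorem lamC_sq_sub_lamD_bound (m : ℝ) (hm : 1 / 2 < m) (n r : ℕ)
    (hn : 2 ≤ n) (hr1 : 1 ≤ r) (hr : 2 * r ≤ n) :
    (lamC m n r) ^ 2 - lamD m n r ≤
      2 * (1 + (2 : ℝ) ^ (1 - 2 * m) * ∑' k : ℕ, ((k : ℝ) + 1) ^ (-(2 * m))) *
          (2 * π * r) ^ (-(2 * m)) * (π * n) ^ (-(2 * m)) +
        (1 + (2 : ℝ) ^ (1 - 2 * m) * ∑' k : ℕ, ((k : ℝ) + 1) ^ (-(2 * m))) ^ 2 *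
          (π * n) ^ (-(4 * m)) :=
  lamC_sq_sub_lamD_bound_general m hm n r hn hr
end
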